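/- arXiv:2211.05173 — 2 statements merged into one kernel-verified Lean document; each statement's English description precedes it below -/
import Mathlib

section
/- Let μ be a closure operator on 2^U (U finite), C a closed set of μ, and α ⊆ μ a cover of μ (α⁺ = μ). Then the body restriction α_{⊆C} = {(S,Sμ) ∈ α | Sμ ⊆ C} satisfies (α_{⊆C})⁺ = μ_{⊆C}, where μ_{⊆C} = {(X,Xμ) ∈ μ | X ⊆ C} regarded as a closure operator on 2^C. -/
open Set

variable {U : Type*}

/-- A closure operator on the power set of `U`: inclusion, monotonicity, idempotence. -/
def IsClosure (μ : Set U → Set U) : Prop :=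
  (∀ X, X ⊆ μ X) ∧ (∀ X Y : Set U, X ⊆ Y → μ X ⊆ μ Y) ∧ (∀ X, μ (μ X) = μ X)

/-- `K` is a key of `μ`: no proper subset of `K` has the same closure. -/
def IsKey (μ : Set U → Set U) (K : Set U) : Prop :=
  ∀ S : Set U, S ⊂ K → μ S ≠ μ K

/-- One step of the Extension-by-Closure recurrence for a set of pairs `α`. -/
def ecStep (α : Set (Set U × Set U)) (X : Set U) : Set U :=
  X ∪ ⋃ p ∈ {q ∈ α | q.1 ⊆ X}, p.2

/-- The iterates `Xα_t` of the Extension-by-Closure recurrence. -/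
def ecIter (α : Set (Set U × Set U)) (X : Set U) : ℕ → Set U
  | 0 => X
  | n + 1 => ecStep α (ecIter α X n)

/-- `Xα⁺`: the eventual stable value of the increasing recurrence
(for finite `U` the union over all iterates is the stable limit). -/
def extC (α : Set (Set U × Set U)) : Set U → Set U :=
  fun X => ⋃ n, ecIter α X n

/-- The closure `μ` viewed as a set of pairs `(X, Xμ)`. -/
def graphOf (μ : Set U → Set U) : Set (Set U × Set U) :=
  {p | p.2 = μ p.1}

/-- `α` is a cover of `μ`: a subset of `μ` (as pairs) with `α⁺ = μ`. -/
def IsCover (μ : Set U → Set U) (α : Set (Set U × Set U)) : Prop :=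
  α ⊆ graphOf μ ∧ extC α = μ

/-! Every pair `(S, T) ∈ α` has `T = Sμ`, so `Xμ` is closed under `α`: the recurrence for `Xα⁺`
never leaves `Xμ`, and every pair it can apply has `T ⊆ Xμ ⊆ C`. Hence restricting `α` to
its pairs with body inside `C` does not change `Xα⁺ = Xμ`. -/

def IsClosedUnder (α : Set (Set U × Set U)) (Y : Set U) : Prop :=
  ∀ p ∈ α, p.1 ⊆ Y → p.2 ⊆ Y

section ExtensionByClosure

variable {α : Set (Set U × Set U)} {X Y : Set U}

theorem ecStep_subset_of_isClosedUnder (hY : IsClosedUnder α Y) (hXY : X ⊆ Y) :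
    ecStep α X ⊆ Y :=
  union_subset hXY <| iUnion₂_subset fun p ⟨hpα, hp⟩ => hY p hpα (hp.trans hXY)

theorem ecIter_subset_of_isClosedUnder (hY : IsClosedUnder α Y) (hXY : X ⊆ Y) (n : ℕ) :
    ecIter α X n ⊆ Y := by
  induction n with
  | zero => exact hXY
  | succ n ih => exact ecStep_subset_of_isClosedUnder hY ih

theorem ecStep_sep_eq (P : Set U × Set U → Prop) (hP : ∀ p ∈ α, p.1 ⊆ X → P p) :
    ecStep {p ∈ α | P p} X = ecStep α X := by
  have hpairs : {q ∈ {p ∈ α | P p} | q.1 ⊆ X} = {q ∈ α | q.1 ⊆ X} := by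
    ext q
    exact ⟨fun ⟨⟨hqα, _⟩, hq⟩ => ⟨hqα, hq⟩, fun ⟨hqα, hq⟩ => ⟨⟨hqα, hP q hqα hq⟩, hq⟩⟩
  rw [ecStep, ecStep, hpairs]

theorem ecIter_sep_eq (P : Set U × Set U → Prop) (hY : IsClosedUnder α Y) (hXY : X ⊆ Y)
    (hP : ∀ p ∈ α, p.1 ⊆ Y → P p) (n : ℕ) :
    ecIter {p ∈ α | P p} X n = ecIter α X n := by
  induction n with
  | zero => rfl
  | succ n ih =>
    rw [ecIter, ecIter, ih]
    exact ecStep_sep_eq P fun p hpα hp =>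
      hP p hpα (hp.trans (ecIter_subset_of_isClosedUnder hY hXY n))

theorem extC_sep_eq (P : Set U × Set U → Prop) (hY : IsClosedUnder α Y) (hXY : X ⊆ Y)
    (hP : ∀ p ∈ α, p.1 ⊆ Y → P p) :
    extC {p ∈ α | P p} X = extC α X :=
  iUnion_congr (ecIter_sep_eq P hY hXY hP)

end ExtensionByClosure

theorem IsClosure.isClosedUnder_apply {μ : Set U → Set U} (hμ : IsClosure μ)
    {α : Set (Set U × Set U)} (hα : α ⊆ graphOf μ) (X : Set U) :
    IsClosedUnder α (μ X) := by
  intro p hpα hp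
  rw [hα hpα, ← hμ.2.2 X]
  exact hμ.2.1 _ _ hp

theorem body_restriction_covers_general (μ : Set U → Set U) (hμ : IsClosure μ)
    (C : Set U) (hC : μ C = C) (α : Set (Set U × Set U)) (hα : IsCover μ α) :
    ∀ X ⊆ C, extC {p ∈ α | p.2 ⊆ C} X = μ X := by
  intro X hXC
  have hclosed : IsClosedUnder α (μ X) := hμ.isClosedUnder_apply hα.1 X
  have hμXC : μ X ⊆ C := hC ▸ hμ.2.1 X C hXC
  rw [extC_sep_eq _ hclosed (hμ.1 X) fun p hpα hp => (hclosed p hpα hp).trans hμXC, hα.2]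

theorem body_restriction_covers [Finite U] (μ : Set U → Set U) (hμ : IsClosure μ)
    (C : Set U) (hC : μ C = C) (α : Set (Set U × Set U)) (hα : IsCover μ α) :
    ∀ X ⊆ C, extC {p ∈ α | p.2 ⊆ C} X = μ X :=
  body_restriction_covers_general μ hμ C hC α hα
end

section
/- Let μ be a closure operator on 2^U (U finite), α ⊆ μ a cover of μ, C a closed set with α_{=C} ≠ ∅, and Y ⊆ U with Yμ = C. Then there exists Z with (Z, C) ∈ α and Y →̇ Z (Y directly determines Z), i.e., Z ⊆ Y(μ_{⊂C})⁺. -/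
/-! Put `W = Y(μ_{⊂C})⁺ ⊆ C`. If no pair `(Z, C) ∈ α` had `Z ⊆ W`, then every pair of `α` applicable
to `W` would have its right side strictly inside `C`, hence lie in `μ_{⊂C}`, under which `W` is
closed. So `W` would be closed under `α`, giving `C = Yμ = Yα⁺ ⊆ W`; but any `(Z, C) ∈ α` has
`Z ⊆ Zμ = C ⊆ W`. -/

open Set

variable {U : Type*}

section ExtensionByClosure

variable (α : Set (Set U × Set U)) (X : Set U)

lemma ecIter_monotone : Monotone (ecIter α X) :=
  monotone_nat_of_le_succ fun _ => subset_union_left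

lemma subset_extC : X ⊆ extC α X :=
  subset_iUnion (ecIter α X) 0

lemma extC_subset_of_closed {W : Set U} (hX : X ⊆ W) (hW : ∀ p ∈ α, p.1 ⊆ W → p.2 ⊆ W) :
    extC α X ⊆ W := by
  refine iUnion_subset fun n => ?_
  induction n with
  | zero => exact hX
  | succ n ih =>
    exact union_subset ih (iUnion₂_subset fun p hp => hW p hp.1 (hp.2.trans ih))

/-- Over a finite universe, `p.1 ⊆ extC α X` already holds at some finite stage of the recurrence. -/
lemma snd_subset_extC [Finite U] {p : Set U × Set U} (hp : p ∈ α) (h1 : p.1 ⊆ extC α X) :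
    p.2 ⊆ extC α X := by
  obtain ⟨I, hIfin, hI⟩ := finite_subset_iUnion (toFinite p.1) h1
  obtain ⟨N, hN⟩ := hIfin.bddAbove
  have h1N : p.1 ⊆ ecIter α X N :=
    hI.trans (iUnion₂_subset fun _ hi => ecIter_monotone α X (hN hi))
  have h2N : p.2 ⊆ ecIter α X (N + 1) :=
    subset_union_of_subset_right
      (subset_biUnion_of_mem (u := Prod.snd) (show p ∈ {q ∈ α | q.1 ⊆ _} from ⟨hp, h1N⟩)) _
  exact h2N.trans (subset_iUnion _ _)

end ExtensionByClosure

theorem exists_directly_determined [Finite U] (μ : Set U → Set U) (hμ : IsClosure μ)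
    (α : Set (Set U × Set U)) (hα : IsCover μ α)
    (C : Set U) (hC : μ C = C) (htop : {p ∈ α | p.2 = C} ≠ ∅)
    (Y : Set U) (hY : μ Y = C) :
    ∃ Z : Set U, (Z, C) ∈ α ∧ Z ⊆ extC {p ∈ graphOf μ | p.2 ⊂ C} Y := by
  obtain ⟨hincl, hmono, -⟩ := hμ
  set W := extC {p ∈ graphOf μ | p.2 ⊂ C} Y
  have hWC : W ⊆ C := extC_subset_of_closed _ _ (hY ▸ hincl Y) fun _ hp _ => hp.2.subset
  by_contra! hZ
  have hCW : C ⊆ W := by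
    rw [← hY, ← hα.2]
    refine extC_subset_of_closed _ _ (subset_extC _ _) ?_
    rintro ⟨A, B⟩ hpα hAW
    have hB : B = μ A := hα.1 hpα
    have hBC : B ⊆ C := hB ▸ hC ▸ hmono _ _ (hAW.trans hWC)
    have hBne : B ≠ C := by rintro rfl; exact hZ A hpα hAW
    exact snd_subset_extC _ _ ⟨hB, hBC.ssubset_of_ne hBne⟩ hAW
  obtain ⟨⟨Z, _⟩, hpα, rfl⟩ := nonempty_iff_ne_empty.2 htop
  exact hZ Z hpα ((hα.1 hpα ▸ hincl Z).trans hCW)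
end
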